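/- arXiv:chao-dyn/9704006 — 6 statements merged into one kernel-verified Lean document; each statement's English description precedes it below -/
import Mathlib

section
/- For fixed a > 0 and h > 0, and for every real number i, the equation y(t) = i has a unique solution t > 0, where y(t) = ((a²t² - 1)/(2at√(1+t²)))·(h√(1+t²) + a) - t/√(1+t²). -/
/-!
With `σ = sin (arctan t) = t / √(1 + t²) ∈ (0, 1)`, which increases with `t`,
`y(t) = h / (2a) · (a² t - 1/t) + (a² σ - (σ + 1/σ)) / 2`.
The first summand increases strictly from `-∞` to `+∞`; the second is increasing, since
`σ ↦ σ + 1/σ` decreases on `(0, 1]`, is at most `a² / 2`, and converges as `t → ∞` because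
`σ → 1`. So `y` is a strictly increasing continuous map of `(0, ∞)` onto `ℝ`.
-/

open Real

/-- The function `y(t)` arising from the geometry of pantographic orbits in the
elliptical stadium billiard. -/
noncomputable def yfun (a h t : ℝ) : ℝ :=
  ((a ^ 2 * t ^ 2 - 1) / (2 * a * t * Real.sqrt (1 + t ^ 2))) *
      (h * Real.sqrt (1 + t ^ 2) + a) -
    t / Real.sqrt (1 + t ^ 2)

open Set Filter Topology

lemma add_inv_antitoneOn : AntitoneOn (fun x : ℝ => x + x⁻¹) (Ioc 0 1) := by
  intro x ⟨hx, _⟩ y ⟨hy, hy1⟩ hxy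
  have hdiff : x + x⁻¹ - (y + y⁻¹) = (y - x) * (1 - x * y) / (x * y) := by
    field_simp; ring
  have : 0 ≤ (y - x) * (1 - x * y) / (x * y) :=
    div_nonneg (mul_nonneg (by linarith) (by nlinarith)) (by positivity)
  dsimp only; linarith

lemma sin_arctan_lt_one (x : ℝ) : sin (arctan x) < 1 := by
  rw [sin_arctan, div_lt_one (by positivity)]
  exact lt_sqrt_of_sq_lt (by linarith)

lemma continuousOn_yfun {a h : ℝ} (ha : a ≠ 0) : ContinuousOn (yfun a h) (Ioi 0) := by
  unfold yfun
  fun_prop (disch := intro t (ht : 0 < t); positivity)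

lemma yfun_eq_sin_arctan {a h t : ℝ} (ha : a ≠ 0) (ht : 0 < t) :
    yfun a h t = h / (2 * a) * (a ^ 2 * t - t⁻¹)
      + (a ^ 2 * sin (arctan t) - (sin (arctan t) + (sin (arctan t))⁻¹)) / 2 := by
  have hsq : √(1 + t ^ 2) ^ 2 = 1 + t ^ 2 := sq_sqrt (by positivity)
  rw [yfun, sin_arctan]
  field_simp
  linear_combination a * hsq

lemma yfun_strictMonoOn {a h : ℝ} (ha : 0 < a) (hh : 0 < h) :
    StrictMonoOn (yfun a h) (Ioi 0) := by
  intro x (hx : 0 < x) y (hy : 0 < y) hxy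
  have hσ : sin (arctan x) ≤ sin (arctan y) := sin_arctan_strictMono.monotone hxy.le
  have hσ_inv : sin (arctan y) + (sin (arctan y))⁻¹ ≤ sin (arctan x) + (sin (arctan x))⁻¹ :=
    add_inv_antitoneOn ⟨sin_arctan_pos.2 hx, (sin_arctan_lt_one x).le⟩
      ⟨sin_arctan_pos.2 hy, (sin_arctan_lt_one y).le⟩ hσ
  have ha_σ := mul_le_mul_of_nonneg_left hσ (sq_nonneg a)
  have hlin : h / (2 * a) * (a ^ 2 * x - x⁻¹) < h / (2 * a) * (a ^ 2 * y - y⁻¹) := by gcongr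
  rw [yfun_eq_sin_arctan ha.ne' hx, yfun_eq_sin_arctan ha.ne' hy]
  linarith

lemma tendsto_yfun_nhdsGT_zero {a h : ℝ} (ha : 0 < a) (hh : 0 < h) :
    Tendsto (yfun a h) (𝓝[>] 0) atBot := by
  have hbound : ∀ t ∈ Ioi (0 : ℝ), yfun a h t ≤ h / (2 * a) * (a ^ 2 * t - t⁻¹) + a ^ 2 / 2 := by
    intro t (ht : 0 < t)
    have hσ := sin_arctan_pos.2 ht
    have := sin_arctan_lt_one t
    rw [yfun_eq_sin_arctan ha.ne' ht]
    gcongr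
    nlinarith [inv_pos.2 hσ]
  have hlin : Tendsto (fun t : ℝ => a ^ 2 * t + -t⁻¹) (𝓝[>] 0) atBot :=
    .add_atBot ((continuous_const_mul _).tendsto' 0 _ (mul_zero _) |>.mono_left nhdsWithin_le_nhds)
      (tendsto_neg_atTop_atBot.comp tendsto_inv_nhdsGT_zero)
  simp only [← sub_eq_add_neg] at hlin
  exact tendsto_atBot_mono' _ (eventually_nhdsWithin_of_forall hbound)
    (tendsto_atBot_add_const_right _ _ (hlin.const_mul_atBot (by positivity)))

lemma tendsto_yfun_atTop {a h : ℝ} (ha : 0 < a) (hh : 0 < h) :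
    Tendsto (yfun a h) atTop atTop := by
  have hσ : Tendsto (fun t => sin (arctan t)) atTop (𝓝 1) := by
    rw [← sin_pi_div_two]
    exact (continuous_sin.tendsto _).comp (tendsto_arctan_atTop.mono_right nhdsWithin_le_nhds)
  have hlin : Tendsto (fun t : ℝ => a ^ 2 * t + -t⁻¹) atTop atTop :=
    .atTop_add (tendsto_id.const_mul_atTop (by positivity))
      (by simpa using tendsto_inv_atTop_zero.neg)
  simp only [← sub_eq_add_neg] at hlin
  refine ((hlin.const_mul_atTop (show 0 < h / (2 * a) by positivity)).atTop_add
    (((hσ.const_mul (a ^ 2)).sub (hσ.add (hσ.inv₀ one_ne_zero))).div_const 2)).congr' ?_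
  filter_upwards [eventually_gt_atTop 0] with t ht
  exact (yfun_eq_sin_arctan ha.ne' ht).symm

theorem stmt_2 (a h : ℝ) (ha : 0 < a) (hh : 0 < h) (i : ℝ) :
    ∃! t : ℝ, 0 < t ∧ yfun a h t = i := by
  obtain ⟨t, ht, rfl⟩ := (continuousOn_yfun ha.ne').surjOn_of_tendsto nonempty_Ioi
    (by rw [tendsto_comp_coe_Ioi_atBot]; exact tendsto_yfun_nhdsGT_zero ha hh)
    (by rw [tendsto_comp_val_Ioi_atTop]; exact tendsto_yfun_atTop ha hh) (mem_univ i)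
  exact ⟨t, ⟨ht, rfl⟩, fun s ⟨hs, hst⟩ => (yfun_strictMonoOn ha hh).injOn hs ht hst⟩
end

section
/- Fix an integer i ≥ 0 and a real number a with 1 < a < √2. Let t_i(a,h) denote the unique positive solution of y(t) = i, where y(t) = ((a²t² - 1)/(2at√(1+t²)))·(h√(1+t²) + a) - t/√(1+t²). Then t_i(a,h) → 1/a as h → +∞. -/
open Real Filter

lemma yfun_eq (a h t : ℝ) (ha : a ≠ 0) (ht : t ≠ 0) :
    yfun a h t = h * (a ^ 2 * t ^ 2 - 1) / (2 * a * t)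
      + (a ^ 2 * t ^ 2 - 1) / (2 * t * Real.sqrt (1 + t ^ 2))
      - t / Real.sqrt (1 + t ^ 2) := by
  have hs : Real.sqrt (1 + t ^ 2) ≠ 0 :=
    ne_of_gt (Real.sqrt_pos.mpr (by positivity))
  unfold yfun
  field_simp

/-- If `0 < T ≤ 1/a` then `yfun a h T < 0`. -/
lemma yfun_neg (a h T : ℝ) (ha : 0 < a) (hh : 0 < h) (hT : 0 < T)
    (hle : T ≤ 1 / a) : yfun a h T < 0 := by
  have hs0 : 0 < Real.sqrt (1 + T ^ 2) := Real.sqrt_pos.mpr (by positivity)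
  have haT : a * T ≤ 1 := by
    have := mul_le_mul_of_nonneg_left hle ha.le
    rwa [mul_one_div, div_self (ne_of_gt ha)] at this
  have hnum : a ^ 2 * T ^ 2 - 1 ≤ 0 := by nlinarith [mul_pos ha hT]
  rw [yfun_eq a h T (ne_of_gt ha) (ne_of_gt hT)]
  have h1 : h * (a ^ 2 * T ^ 2 - 1) / (2 * a * T) ≤ 0 :=
    div_nonpos_of_nonpos_of_nonneg (by nlinarith) (by positivity)
  have h2 : (a ^ 2 * T ^ 2 - 1) / (2 * T * Real.sqrt (1 + T ^ 2)) ≤ 0 :=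
    div_nonpos_of_nonpos_of_nonneg hnum (by positivity)
  have h3 : 0 < T / Real.sqrt (1 + T ^ 2) := div_pos hT hs0
  linarith

/-- If `1 < a*u` and `u ≤ T` then `yfun a h T ≥ h * c - 1` where
`c = (a²u²-1)/(2au)`. -/
lemma yfun_ge (a h T u : ℝ) (ha : 0 < a) (hh : 0 < h) (hu : 0 < u)
    (hau : 1 < a * u) (hle : u ≤ T) :
    h * ((a ^ 2 * u ^ 2 - 1) / (2 * a * u)) - 1 ≤ yfun a h T := by
  have hT : 0 < T := lt_of_lt_of_le hu hle
  have hs0 : 0 < Real.sqrt (1 + T ^ 2) := Real.sqrt_pos.mpr (by positivity)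
  have hs2 : Real.sqrt (1 + T ^ 2) ^ 2 = 1 + T ^ 2 := Real.sq_sqrt (by positivity)
  have hTs : T ≤ Real.sqrt (1 + T ^ 2) := by nlinarith
  have haT : 1 < a * T := lt_of_lt_of_le hau (mul_le_mul_of_nonneg_left hle ha.le)
  have hTnum : 0 ≤ a ^ 2 * T ^ 2 - 1 := by nlinarith
  rw [yfun_eq a h T (ne_of_gt ha) (ne_of_gt hT)]
  have hmono : (a ^ 2 * u ^ 2 - 1) / (2 * a * u) ≤ (a ^ 2 * T ^ 2 - 1) / (2 * a * T) := by
    rw [div_le_div_iff₀ (by positivity) (by positivity)]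
    nlinarith [mul_nonneg (mul_nonneg (sub_nonneg.mpr hle)
      (show (0:ℝ) ≤ a ^ 2 * T * u + 1 by positivity)) ha.le]
  have h1 : h * ((a ^ 2 * u ^ 2 - 1) / (2 * a * u)) ≤ h * (a ^ 2 * T ^ 2 - 1) / (2 * a * T) := by
    rw [mul_div_assoc]
    exact mul_le_mul_of_nonneg_left hmono hh.le
  have h2 : 0 ≤ (a ^ 2 * T ^ 2 - 1) / (2 * T * Real.sqrt (1 + T ^ 2)) := by positivity
  have h3 : T / Real.sqrt (1 + T ^ 2) ≤ 1 := by
    rw [div_le_one hs0]; exact hTs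
  linarith

theorem stmt_3 (i : ℕ) (a : ℝ) (ha₁ : 1 < a) (ha₂ : a < Real.sqrt 2)
    (t : ℝ → ℝ) (ht : ∀ h : ℝ, 0 < h → 0 < t h ∧ yfun a h (t h) = i) :
    Tendsto t atTop (nhds (1 / a)) := by
  have ha0 : 0 < a := lt_trans one_pos ha₁
  rw [Metric.tendsto_atTop]
  intro ε hε
  have hu0 : 0 < 1 / a + ε := by positivity
  have hau : a * (1 / a + ε) = 1 + a * ε := by field_simp
  have hau1 : 1 < a * (1 / a + ε) := by
    rw [hau]; nlinarith [mul_pos ha0 hε]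
  have hnum : 0 < a ^ 2 * (1 / a + ε) ^ 2 - 1 := by nlinarith
  set c : ℝ := (a ^ 2 * (1 / a + ε) ^ 2 - 1) / (2 * a * (1 / a + ε)) with hcdef
  have hc : 0 < c := div_pos hnum (by positivity)
  refine ⟨max 1 ((i + 1) / c + 1), fun h hh => ?_⟩
  have hh1 : (1 : ℝ) ≤ h := le_trans (le_max_left _ _) hh
  have hh2 : (i + 1) / c + 1 ≤ h := le_trans (le_max_right _ _) hh
  have hh0 : 0 < h := lt_of_lt_of_le one_pos hh1
  obtain ⟨hT0, hTy⟩ := ht h hh0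
  -- lower bound: 1/a < t h
  have hT1 : 1 / a < t h := by
    by_contra hle
    push_neg at hle
    have := yfun_neg a h (t h) ha0 hh0 hT0 hle
    rw [hTy] at this
    exact absurd this (not_lt.mpr (Nat.cast_nonneg i))
  -- upper bound: t h < 1/a + ε
  have hT2 : t h < 1 / a + ε := by
    by_contra hle
    push_neg at hle
    have hge := yfun_ge a h (t h) (1 / a + ε) ha0 hh0 hu0 hau1 hle
    rw [hTy] at hge
    have hhc : ((i + 1) / c + 1) * c ≤ h * c :=
      mul_le_mul_of_nonneg_right hh2 hc.le
    have hcan : ((i + 1) / c + 1) * c = (i + 1) + c := by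
      field_simp
    rw [← hcdef] at hge
    linarith
  rw [Real.dist_eq, abs_lt]
  constructor <;> linarith
end

section
/- Fix a with 1 < a < √2. For h > 0 let t_0(a,h) be the unique positive solution of y(t) = 0 where y(t) = ((a²t² - 1)/(2at√(1+t²)))·(h√(1+t²) + a) - t/√(1+t²). Then t_0(a,h) → +∞ as h → 0⁺ (equivalently, the angle λ = arctan t_0 tends to π/2). -/
open Real Filter

/-!
Clearing denominators, `y(t) = 0` with `t > 0` reads
`h (a²t² - 1) √(1 + t²) = a ((2 - a²) t² + 1)`, and the right side is at least `a` because
`a² ≤ 2`. Hence `h · a² t² √(1 + t²) ≥ a`, so `(1 + t₀(h))³ ≥ 1 / (a h) → ∞` as `h → 0⁺`.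
-/

theorem Filter.Tendsto.atTop_of_pow {α : Type*} {l : Filter α} {f : α → ℝ} {n : ℕ}
    (hn : n ≠ 0) (hf : ∀ᶠ x in l, 0 ≤ f x) (hfn : Tendsto (fun x => f x ^ n) l atTop) :
    Tendsto f l atTop := by
  have hn' : (0 : ℝ) < (n : ℝ)⁻¹ := inv_pos.2 (Nat.cast_pos.2 (Nat.pos_of_ne_zero hn))
  refine ((tendsto_rpow_atTop hn').comp hfn).congr' ?_
  filter_upwards [hf] with x hx using Real.pow_rpow_inv_natCast hx hn

theorem yfun_eq_zero_iff {a h t : ℝ} (ha : a ≠ 0) (ht : t ≠ 0) :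
    yfun a h t = 0 ↔
      h * (a ^ 2 * t ^ 2 - 1) * √(1 + t ^ 2) = a * ((2 - a ^ 2) * t ^ 2 + 1) := by
  have hs : √(1 + t ^ 2) ≠ 0 := (Real.sqrt_pos.2 (by positivity)).ne'
  rw [yfun, sub_eq_zero, div_mul_eq_mul_div, div_eq_div_iff (by simp [*]) hs]
  constructor <;> intro H
  · have := mul_right_cancel₀ hs <| H.trans
      (by ring : t * (2 * a * t * √(1 + t ^ 2)) = 2 * a * t ^ 2 * √(1 + t ^ 2))
    linear_combination this
  · linear_combination √(1 + t ^ 2) * H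

theorem one_le_mul_mul_one_add_pow_of_yfun_eq_zero {a h t : ℝ} (ha : 0 < a) (ha₂ : a ^ 2 ≤ 2)
    (hh : 0 ≤ h) (ht : 0 < t) (hy : yfun a h t = 0) : 1 ≤ a * h * (1 + t) ^ 3 := by
  rw [yfun_eq_zero_iff ha.ne' ht.ne'] at hy
  have hs : √(1 + t ^ 2) ≤ 1 + t :=
    Real.sqrt_le_iff.2 ⟨by positivity, by nlinarith⟩
  have key : a ≤ a * (a * h * t ^ 2 * (1 + t)) := calc
    a ≤ a * ((2 - a ^ 2) * t ^ 2 + 1) := le_mul_of_one_le_right ha.le (by nlinarith)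
    _ = h * (a ^ 2 * t ^ 2 - 1) * √(1 + t ^ 2) := hy.symm
    _ ≤ h * (a ^ 2 * t ^ 2) * √(1 + t ^ 2) := by gcongr; linarith
    _ ≤ h * (a ^ 2 * t ^ 2) * (1 + t) := by gcongr
    _ = a * (a * h * t ^ 2 * (1 + t)) := by ring
  calc 1 ≤ a * h * t ^ 2 * (1 + t) := (le_mul_iff_one_le_right ha).1 key
    _ ≤ a * h * (1 + t) ^ 2 * (1 + t) := by gcongr; linarith
    _ = a * h * (1 + t) ^ 3 := by ring

theorem stmt_4 (a : ℝ) (ha₁ : 1 < a) (ha₂ : a < Real.sqrt 2)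
    (t₀ : ℝ → ℝ) (ht : ∀ h : ℝ, 0 < h → 0 < t₀ h ∧ yfun a h (t₀ h) = 0) :
    Tendsto t₀ (nhdsWithin 0 (Set.Ioi 0)) atTop := by
  have ha : 0 < a := one_pos.trans ha₁
  have ha_sq : a ^ 2 ≤ 2 := ((Real.lt_sqrt ha.le).1 ha₂).le
  have hpos : ∀ᶠ h : ℝ in nhdsWithin 0 (Set.Ioi 0), 0 < h := self_mem_nhdsWithin
  have hinv : Tendsto (fun h => a⁻¹ * h⁻¹) (nhdsWithin 0 (Set.Ioi 0)) atTop :=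
    tendsto_inv_nhdsGT_zero.const_mul_atTop (inv_pos.2 ha)
  have hcube : Tendsto (fun h => (1 + t₀ h) ^ 3) (nhdsWithin 0 (Set.Ioi 0)) atTop := by
    refine tendsto_atTop_mono' _ ?_ hinv
    filter_upwards [hpos] with h hh
    rw [← mul_inv, inv_le_iff_one_le_mul₀ (by positivity), mul_comm]
    exact one_le_mul_mul_one_add_pow_of_yfun_eq_zero ha ha_sq hh.le (ht h hh).1 (ht h hh).2
  have hshift := tendsto_atTop_add_const_left _ (-1) (hcube.atTop_of_pow three_ne_zero
    (by filter_upwards [hpos] with h hh using by linarith [(ht h hh).1]))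
  simpa using hshift
end

section
/- Let y_i be the unique positive real root of P(y) = y³ + (i/(4))y² - (1/2)y - i/4 (i.e., the case a = √2) for each integer i ≥ 1. Then y_i → 1 as i → ∞, and moreover (i/2)(1 - y_i²) → 1 as i → ∞. -/
/-!
Writing the equation as `y (y² - 1/2) = (i/4)(1 - y²)`, a positive root cannot exceed `1`
(the left side would be positive, the right side negative), and the same identity gives
`(i/2)(1 - y²) = 2y³ - y ≤ 1`, so `1 - y ≤ 2/i`. Hence `y_i → 1`, and then
`(i/2)(1 - y_i²) = 2y_i³ - y_i → 1`.
-/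

open Filter

section Cubic

variable {t y : ℝ}

theorem half_mul_one_sub_sq_eq (h : y ^ 3 + t / 4 * y ^ 2 - y / 2 - t / 4 = 0) :
    t / 2 * (1 - y ^ 2) = 2 * y ^ 3 - y := by
  linear_combination -2 * h

theorem le_one_of_cubic_eq_zero (ht : 0 ≤ t) (hy : 0 < y)
    (h : y ^ 3 + t / 4 * y ^ 2 - y / 2 - t / 4 = 0) : y ≤ 1 := by
  by_contra! hy1
  have hlhs : 0 < 2 * y ^ 3 - y := by nlinarith
  have hrhs : t / 2 * (1 - y ^ 2) ≤ 0 :=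
    mul_nonpos_of_nonneg_of_nonpos (by positivity) (by nlinarith)
  linarith [half_mul_one_sub_sq_eq h]

theorem mul_one_sub_le_two_of_cubic_eq_zero (ht : 0 ≤ t) (hy : 0 < y)
    (h : y ^ 3 + t / 4 * y ^ 2 - y / 2 - t / 4 = 0) : t * (1 - y) ≤ 2 := by
  have hy1 := le_one_of_cubic_eq_zero ht hy h
  calc t * (1 - y) ≤ t * (1 - y ^ 2) := by
        gcongr
        nlinarith
    _ = 2 * (2 * y ^ 3 - y) := by linear_combination 2 * half_mul_one_sub_sq_eq h
    _ ≤ 2 := by nlinarith [sq_nonneg y]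

end Cubic

theorem stmt_13 (y : ℕ → ℝ)
    (hy : ∀ i : ℕ, 1 ≤ i → 0 < y i ∧
      (y i) ^ 3 + (i / 4) * (y i) ^ 2 - (y i) / 2 - i / 4 = 0) :
    Tendsto y atTop (nhds 1) ∧
    Tendsto (fun i : ℕ => (i / 2 : ℝ) * (1 - (y i) ^ 2)) atTop (nhds 1) := by
  have hbounds : ∀ᶠ i : ℕ in atTop, 1 - 2 / (i : ℝ) ≤ y i ∧ y i ≤ 1 := by
    filter_upwards [eventually_ge_atTop 1] with i hi
    obtain ⟨hpos, heq⟩ := hy i hi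
    have hi0 : (0 : ℝ) < i := by exact_mod_cast hi
    refine ⟨?_, le_one_of_cubic_eq_zero hi0.le hpos heq⟩
    have := mul_one_sub_le_two_of_cubic_eq_zero hi0.le hpos heq
    rw [sub_le_comm, le_div_iff₀ hi0]
    linarith
  have hlow : Tendsto (fun i : ℕ => 1 - 2 / (i : ℝ)) atTop (nhds 1) := by
    simpa using tendsto_const_nhds.sub (tendsto_const_div_atTop_nhds_zero_nat (2 : ℝ))
  have hlim : Tendsto y atTop (nhds 1) :=
    tendsto_of_tendsto_of_tendsto_of_le_of_le' hlow tendsto_const_nhds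
      (hbounds.mono fun _ h => h.1) (hbounds.mono fun _ h => h.2)
  refine ⟨hlim, ?_⟩
  have hcubic : Tendsto (fun i => 2 * y i ^ 3 - y i) atTop (nhds 1) := by
    convert ((hlim.pow 3).const_mul 2).sub hlim
    norm_num
  refine hcubic.congr' ?_
  filter_upwards [eventually_ge_atTop 1] with i hi
  exact (half_mul_one_sub_sq_eq (hy i hi).2).symm
end

section
/- Let i ≥ 1 be an integer, a > 1, and let y ∈ (1/a, 1) be a root of P(y) = y³ + (i(a²-1)/(2a²))y² - (1/a²)y - i/(2a²) depending smoothly on a. Then dy/da = -a y²(i + 2y) / (i y(a² - 1) + 3a²y² - 1) < 0. -/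
/-!
Differentiating `P_{i,b}(y b) = 0` at `b = a` gives `y' · D = -a y² (i + 2y)`, where `D = ∂P/∂y / 2`
is the denominator. Since `a y > 1` and `a > 1`, we get `D > 3 a² y² - 1 > 0`, while the
numerator `a y² (i + 2y)` is positive; hence the formula and the sign.
-/

open Filter Topology

/-- The cubic `P_{c,a}` multiplied by `2a²`, so that its coefficients are polynomial in `a`. -/
def rootCubic (c a y : ℝ) : ℝ :=
  2 * a ^ 2 * y ^ 3 + c * (a ^ 2 - 1) * y ^ 2 - 2 * y - c

def rootCubicDenom (c a y : ℝ) : ℝ :=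
  c * y * (a ^ 2 - 1) + 3 * a ^ 2 * y ^ 2 - 1

theorem HasDerivAt.rootCubic_comp {c a y' : ℝ} {y : ℝ → ℝ} (hy : HasDerivAt y y' a) :
    HasDerivAt (fun b ↦ rootCubic c b (y b))
      (2 * (a * y a ^ 2 * (c + 2 * y a) + y' * rootCubicDenom c a (y a))) a := by
  have hsq : HasDerivAt (fun b : ℝ ↦ b ^ 2) (2 * a) a := by simpa using hasDerivAt_pow 2 a
  have h := ((((hsq.const_mul 2).fun_mul (hy.fun_pow 3)).fun_add
    (((hsq.sub_const 1).const_mul c).fun_mul (hy.fun_pow 2))).fun_sub (hy.const_mul 2)).sub_const c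
  refine h.congr_deriv ?_
  rw [rootCubicDenom]
  push_cast
  ring

theorem deriv_mul_rootCubicDenom_of_eventually_root {c a y' : ℝ} {y : ℝ → ℝ}
    (hroot : ∀ᶠ b in 𝓝 a, rootCubic c b (y b) = 0) (hy : HasDerivAt y y' a) :
    y' * rootCubicDenom c a (y a) = -a * y a ^ 2 * (c + 2 * y a) := by
  have hzero : HasDerivAt (fun b ↦ rootCubic c b (y b)) 0 a :=
    (hasDerivAt_const a 0).congr_of_eventuallyEq hroot
  have := hy.rootCubic_comp.unique hzero
  linarith

theorem rootCubicDenom_pos {c a y : ℝ} (hc : 0 ≤ c) (ha : 1 < a) (hy : 1 / a < y) :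
    0 < rootCubicDenom c a y := by
  have ha0 : 0 < a := one_pos.trans ha
  have hy0 : 0 < y := (one_div_pos.mpr ha0).trans hy
  have hay : 1 < a * y := by rwa [div_lt_iff₀ ha0, mul_comm] at hy
  have hlin : 0 ≤ c * y * (a ^ 2 - 1) := by
    have : 0 ≤ a ^ 2 - 1 := by nlinarith
    positivity
  have hquad : 1 < a ^ 2 * y ^ 2 := by nlinarith
  unfold rootCubicDenom
  linarith

theorem stmt_15_general (i : ℕ) (a : ℝ) (ha : 1 < a)
    (y : ℝ → ℝ) (y' : ℝ)
    (hroot : ∀ᶠ b in nhds a,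
      2 * b ^ 2 * (y b) ^ 3 + i * (b ^ 2 - 1) * (y b) ^ 2 - 2 * (y b) - i = 0)
    (hrange : y a ∈ Set.Ioo (1 / a) 1)
    (hderiv : HasDerivAt y y' a) :
    y' = -a * (y a) ^ 2 * (i + 2 * y a) /
        (i * (y a) * (a ^ 2 - 1) + 3 * a ^ 2 * (y a) ^ 2 - 1) ∧
    y' < 0 := by
  have ha0 : 0 < a := one_pos.trans ha
  have hy0 : 0 < y a := (one_div_pos.mpr ha0).trans hrange.1
  have hD : 0 < rootCubicDenom i a (y a) := rootCubicDenom_pos i.cast_nonneg ha hrange.1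
  have hy' : y' = -a * y a ^ 2 * (i + 2 * y a) / rootCubicDenom i a (y a) := by
    rw [eq_div_iff hD.ne', deriv_mul_rootCubicDenom_of_eventually_root hroot hderiv]
  refine ⟨hy', hy'.trans_lt (div_neg_of_neg_of_pos ?_ hD)⟩
  have : 0 < a * y a ^ 2 * (i + 2 * y a) := by positivity
  linarith

theorem stmt_15 (i : ℕ) (hi : 1 ≤ i) (a : ℝ) (ha : 1 < a)
    (y : ℝ → ℝ) (y' : ℝ)
    (hroot : ∀ᶠ b in nhds a,
      2 * b ^ 2 * (y b) ^ 3 + i * (b ^ 2 - 1) * (y b) ^ 2 - 2 * (y b) - i = 0)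
    (hrange : y a ∈ Set.Ioo (1 / a) 1)
    (hderiv : HasDerivAt y y' a) :
    y' = -a * (y a) ^ 2 * (i + 2 * y a) /
        (i * (y a) * (a ^ 2 - 1) + 3 * a ^ 2 * (y a) ^ 2 - 1) ∧
    y' < 0 :=
  stmt_15_general i a ha y y' hroot hrange hderiv
end

section
/- For every integer n ≥ 2 there exists a unique ā_n > √2 satisfying tan(π/n) = 2√(ā_n² - 1)/(ā_n² - 2); in particular ā_2 = √2 cannot be exceeded by any a < √2 (no 4-periodic pantographic-like orbit exists for a < √2), and ā_3 = 2 (no 6-periodic pantographic-like orbit exists for a < 2). -/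
/-!
Write `s = sin (π/n)`, `c = cos (π/n)` and `v = √(x² - 1)`. The equation becomes the quadratic
`s v² - 2 c v - s = 0`, which factors as `(s v - (1 + c)) (s v + (1 - c)) = 0` because `s² = 1 - c²`.
Its only nonnegative root is `v = (1 + c) / s = cot (π / 2n) ≥ 1`, so `ā_n = √(1 + v²) = 1 / sin (π / 2n)`,
which is `√2` for `n = 2` and `2` for `n = 3`.
-/

open Real

section Quadratic

variable {s c : ℝ}

theorem mul_sq_sub_two_eq_iff (hs : 0 < s) (hsc : s ^ 2 + c ^ 2 = 1) {x : ℝ} (hx : 1 ≤ x ^ 2) :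
    s * (x ^ 2 - 2) = 2 * c * √(x ^ 2 - 1) ↔ s * √(x ^ 2 - 1) = 1 + c := by
  set v := √(x ^ 2 - 1)
  have hv0 : 0 ≤ v := sqrt_nonneg _
  have hv2 : v ^ 2 = x ^ 2 - 1 := sq_sqrt (by linarith)
  have hc1 : c ≤ 1 := by nlinarith
  have hfactor : s * (s * v ^ 2 - 2 * c * v - s) = (s * v - (1 + c)) * (s * v + (1 - c)) := by
    linear_combination (-1 : ℝ) * hsc
  have hpos : 0 < s * v + (1 - c) := by nlinarith
  constructor
  · intro h
    have hzero : (s * v - (1 + c)) * (s * v + (1 - c)) = 0 := by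
      rw [← hfactor]; linear_combination s * h + s * s * hv2
    linarith [(mul_eq_zero.1 hzero).resolve_right hpos.ne']
  · intro h
    have hzero : s * (s * v ^ 2 - 2 * c * v - s) = 0 := by rw [hfactor, h]; ring
    have := (mul_eq_zero.1 hzero).resolve_left hs.ne'
    linear_combination this - hv2 * s

theorem existsUnique_mul_sq_sub_two_eq (hs : 0 < s) (hc : 0 ≤ c) (hsc : s ^ 2 + c ^ 2 = 1) :
    ∃! x : ℝ, √2 ≤ x ∧ s * (x ^ 2 - 2) = 2 * c * √(x ^ 2 - 1) := by
  set u := (1 + c) / s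
  have hu1 : 1 ≤ u := (one_le_div₀ hs).2 (by nlinarith)
  have hsu : s * u = 1 + c := mul_div_cancel₀ _ hs.ne'
  refine ⟨√(1 + u ^ 2), ?_, ?_⟩
  · have hroot : √(√(1 + u ^ 2) ^ 2 - 1) = u := by
      rw [sq_sqrt (by positivity), add_sub_cancel_left, sqrt_sq (by linarith)]
    refine ⟨sqrt_le_sqrt (by nlinarith), ?_⟩
    rw [mul_sq_sub_two_eq_iff hs hsc (by rw [sq_sqrt (by positivity)]; nlinarith), hroot, hsu]
  · rintro x ⟨hx, h⟩
    obtain ⟨hx0, hx2⟩ := sqrt_le_iff.1 hx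
    rw [mul_sq_sub_two_eq_iff hs hsc (by linarith)] at h
    have hv : √(x ^ 2 - 1) = u := by rw [eq_div_iff hs.ne', mul_comm, h]
    rw [← hv, sq_sqrt (by linarith), add_sub_cancel, sqrt_sq hx0]

end Quadratic

theorem tan_eq_div_iff {θ a b : ℝ} (hθ : cos θ ≠ 0) (hb : b ≠ 0) :
    tan θ = a / b ↔ sin θ * b = a * cos θ := by
  rw [tan_eq_sin_div_cos, div_eq_div_iff hθ hb]

theorem pi_div_natCast_le {m n : ℕ} (hm : 0 < m) (hmn : m ≤ n) : π / n ≤ π / m :=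
  div_le_div_of_nonneg_left pi_pos.le (Nat.cast_pos.2 hm) (Nat.cast_le.2 hmn)

theorem stmt_19 :
    (∀ n : ℕ, 2 ≤ n →
      ∃! x : ℝ, Real.sqrt 2 ≤ x ∧
        Real.sin (π / n) * (x ^ 2 - 2) = 2 * Real.cos (π / n) * Real.sqrt (x ^ 2 - 1)) ∧
    (Real.sin (π / 2) * ((Real.sqrt 2) ^ 2 - 2) =
      2 * Real.cos (π / 2) * Real.sqrt ((Real.sqrt 2) ^ 2 - 1)) ∧
    (Real.sin (π / 3) * ((2 : ℝ) ^ 2 - 2) =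
      2 * Real.cos (π / 3) * Real.sqrt ((2 : ℝ) ^ 2 - 1)) ∧
    (∀ n : ℕ, 3 ≤ n →
      ∀ x : ℝ, Real.sqrt 2 < x →
        (Real.tan (π / n) = 2 * Real.sqrt (x ^ 2 - 1) / (x ^ 2 - 2) ↔
          Real.sin (π / n) * (x ^ 2 - 2) = 2 * Real.cos (π / n) * Real.sqrt (x ^ 2 - 1))) := by
  refine ⟨fun n hn ↦ ?_, by simp, ?_, fun n hn x hx ↦ ?_⟩
  · have hpos : 0 < π / n := div_pos pi_pos (Nat.cast_pos.2 (by omega))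
    have hle : π / n ≤ π / 2 := mod_cast pi_div_natCast_le two_pos hn
    exact existsUnique_mul_sq_sub_two_eq (sin_pos_of_pos_of_lt_pi hpos (by linarith [pi_pos]))
      (cos_nonneg_of_mem_Icc ⟨by linarith, hle⟩) (sin_sq_add_cos_sq _)
  · rw [sin_pi_div_three, cos_pi_div_three]
    norm_num
  · have hlt : π / n < π / 2 := (pi_div_natCast_le three_pos hn).trans_lt (by linarith [pi_pos])
    have hpos : 0 < π / n := div_pos pi_pos (Nat.cast_pos.2 (by omega))
    have hcos : cos (π / n) ≠ 0 := (cos_pos_of_mem_Ioo ⟨by linarith, hlt⟩).ne'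
    have hx2 : x ^ 2 - 2 ≠ 0 := by nlinarith [sq_sqrt (zero_le_two : (0 : ℝ) ≤ 2), sqrt_nonneg 2]
    rw [tan_eq_div_iff hcos hx2, mul_right_comm]
end
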